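/- (Theorem 2.1, MSE formula.) Under the hypotheses of Theorem 2.1—K symmetric with nonnegative quadratic form on T, measures G₁,…,G_m and matrix D with ∫_T f_i dG_j = δ_{ij}, ∫_T K(t,s) G(dt) = D f(s) for all s ∈ T and D_{ij} = ∬_{T×T} K(t,s) G_i(dt) G_j(ds), and ζ_{t₀} with ∫_T K(t,s) ζ_{t₀}(dt) = K(t₀,s) for all s ∈ T—let c = f(t₀) − ∫_T f dζ_{t₀} and Q* = ζ_{t₀} + Σ_j c_j G_j. Then the minimal mean squared error equals M(Q*) = K(t₀,t₀) + cᵀ D f(t₀) − ∫_T K(t,t₀) Q*(dt), where M(Q) = K(t₀,t₀) − 2∫_T K(t,t₀) Q(dt) + ∬_{T×T} K(t,s) Q(dt)Q(ds). -/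

import Mathlib

/-!
By symmetry of `K` and the defining identities of `ζ` and of the `G j`, integrating `K(t, ·)`
against `Q* = ζ + ∑ j, c j • G j` gives `K(t, t₀) + cᵀ D f(t)`. Since the `G j` are
biorthogonal to the regressors, the correction `c` makes `Q*` unbiased: `∫ f dQ* = f(t₀)`.
Integrating the first identity against `Q*` and using the second turns the quadratic term of
`M(Q*)` into `∫ K(t, t₀) Q*(dt) + cᵀ D f(t₀)`, which is the claimed value.
-/

open MeasureTheory

/-- Integral of a real function against a finite signed measure, via the Jordan
decomposition. -/
noncomputable def sInt {α : Type*} [MeasurableSpace α] (μ : SignedMeasure α) (g : α → ℝ) : ℝ :=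
  (∫ x, g x ∂μ.toJordanDecomposition.posPart) - ∫ x, g x ∂μ.toJordanDecomposition.negPart

section sInt

variable {α : Type*} [MeasurableSpace α]

theorem integrable_of_abs_le {g : α → ℝ} (hg : Measurable g) {C : ℝ} (hgC : ∀ x, |g x| ≤ C)
    (ν : Measure α) [IsFiniteMeasure ν] : Integrable g ν :=
  .of_bound hg.aestronglyMeasurable C (ae_of_all _ hgC)

theorem sInt_eq_integral_sub_integral {μ : SignedMeasure α} {a b : Measure α}
    [IsFiniteMeasure a] [IsFiniteMeasure b] (h : μ = a.toSignedMeasure - b.toSignedMeasure)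
    {g : α → ℝ} (hg : Measurable g) {C : ℝ} (hgC : ∀ x, |g x| ≤ C) :
    sInt μ g = (∫ x, g x ∂a) - ∫ x, g x ∂b := by
  set p := μ.toJordanDecomposition.posPart
  set n := μ.toJordanDecomposition.negPart
  have hμ : μ = p.toSignedMeasure - n.toSignedMeasure :=
    μ.toSignedMeasure_toJordanDecomposition.symm
  have hsum : a + n = p + b := by
    ext E hE
    have hE' := congrArg (fun σ : SignedMeasure α => σ E) (h.symm.trans hμ)
    simp only [Measure.toSignedMeasure_sub_apply hE, Measure.real] at hE'
    rw [← ENNReal.toReal_eq_toReal_iff' (by finiteness) (by finiteness), Measure.add_apply,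
      Measure.add_apply, ENNReal.toReal_add (by finiteness) (by finiteness),
      ENNReal.toReal_add (by finiteness) (by finiteness)]
    linarith
  have hint := congrArg (fun ν => ∫ x, g x ∂ν) hsum
  simp only [integral_add_measure (integrable_of_abs_le hg hgC _)
    (integrable_of_abs_le hg hgC _)] at hint
  unfold sInt
  linarith

theorem sInt_zero_measure (g : α → ℝ) : sInt (0 : SignedMeasure α) g = 0 := by
  simp [sInt, SignedMeasure.toJordanDecomposition_zero, JordanDecomposition.zero_posPart,
    JordanDecomposition.zero_negPart]

theorem sInt_add_measure (μ ν : SignedMeasure α) {g : α → ℝ} (hg : Measurable g) {C : ℝ}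
    (hgC : ∀ x, |g x| ≤ C) : sInt (μ + ν) g = sInt μ g + sInt ν g := by
  have h : μ + ν =
      (μ.toJordanDecomposition.posPart + ν.toJordanDecomposition.posPart).toSignedMeasure -
        (μ.toJordanDecomposition.negPart + ν.toJordanDecomposition.negPart).toSignedMeasure := by
    conv_lhs => rw [← μ.toSignedMeasure_toJordanDecomposition,
      ← ν.toSignedMeasure_toJordanDecomposition]
    simp only [JordanDecomposition.toSignedMeasure, Measure.toSignedMeasure_add]
    abel
  rw [sInt_eq_integral_sub_integral h hg hgC,
    integral_add_measure (integrable_of_abs_le hg hgC _) (integrable_of_abs_le hg hgC _),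
    integral_add_measure (integrable_of_abs_le hg hgC _) (integrable_of_abs_le hg hgC _)]
  unfold sInt
  ring

theorem sInt_smul_measure (r : ℝ) (μ : SignedMeasure α) (g : α → ℝ) :
    sInt (r • μ) g = r * sInt μ g := by
  unfold sInt
  rw [SignedMeasure.toJordanDecomposition_smul_real]
  rcases le_or_gt 0 r with hr | hr
  · rw [JordanDecomposition.real_smul_posPart_nonneg _ _ hr,
      JordanDecomposition.real_smul_negPart_nonneg _ _ hr, integral_smul_nnreal_measure,
      integral_smul_nnreal_measure, NNReal.smul_def, NNReal.smul_def, Real.coe_toNNReal _ hr]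
    simp only [smul_eq_mul]
    ring
  · rw [JordanDecomposition.real_smul_posPart_neg _ _ hr,
      JordanDecomposition.real_smul_negPart_neg _ _ hr, integral_smul_nnreal_measure,
      integral_smul_nnreal_measure, NNReal.smul_def, NNReal.smul_def,
      Real.coe_toNNReal _ (by linarith)]
    simp only [smul_eq_mul]
    ring

theorem sInt_finset_sum_measure {ι : Type*} (s : Finset ι) (μ : ι → SignedMeasure α)
    {g : α → ℝ} (hg : Measurable g) {C : ℝ} (hgC : ∀ x, |g x| ≤ C) :
    sInt (∑ j ∈ s, μ j) g = ∑ j ∈ s, sInt (μ j) g := by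
  induction s using Finset.cons_induction with
  | empty => simp [sInt_zero_measure]
  | cons j s hj ih => rw [Finset.sum_cons, Finset.sum_cons, sInt_add_measure _ _ hg hgC, ih]

theorem sInt_add {μ : SignedMeasure α} {g h : α → ℝ} (hg : Integrable g μ.totalVariation)
    (hh : Integrable h μ.totalVariation) :
    sInt μ (fun x => g x + h x) = sInt μ g + sInt μ h := by
  obtain ⟨hg₁, hg₂⟩ := integrable_add_measure.1 hg
  obtain ⟨hh₁, hh₂⟩ := integrable_add_measure.1 hh
  unfold sInt
  rw [integral_add hg₁ hh₁, integral_add hg₂ hh₂]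
  ring

theorem sInt_const_mul (μ : SignedMeasure α) (r : ℝ) (g : α → ℝ) :
    sInt μ (fun x => r * g x) = r * sInt μ g := by
  unfold sInt
  rw [integral_const_mul, integral_const_mul, mul_sub]

theorem sInt_finset_sum {ι : Type*} (s : Finset ι) {μ : SignedMeasure α} {g : ι → α → ℝ}
    (hg : ∀ i ∈ s, Integrable (g i) μ.totalVariation) :
    sInt μ (fun x => ∑ i ∈ s, g i x) = ∑ i ∈ s, sInt μ (g i) := by
  unfold sInt
  rw [integral_finsetSum _ fun i hi => (integrable_add_measure.1 (hg i hi)).1,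
    integral_finsetSum _ fun i hi => (integrable_add_measure.1 (hg i hi)).2,
    Finset.sum_sub_distrib]

end sInt

section BLUP

variable {α ι : Type*} [MeasurableSpace α] [Fintype ι]

theorem sInt_add_sum_smul_measure (ζ : SignedMeasure α) (G : ι → SignedMeasure α) (c : ι → ℝ)
    {g : α → ℝ} (hg : Measurable g) {C : ℝ} (hgC : ∀ x, |g x| ≤ C) :
    sInt (ζ + ∑ j, c j • G j) g = sInt ζ g + ∑ j, c j * sInt (G j) g := by
  simp only [sInt_add_measure _ _ hg hgC, sInt_finset_sum_measure _ _ hg hgC,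
    sInt_smul_measure]

theorem sInt_add_sum_smul_of_biorthogonal [DecidableEq ι] (ζ : SignedMeasure α)
    (G : ι → SignedMeasure α) (c : ι → ℝ) {F : α → ι → ℝ} (hF : ∀ i, Measurable fun a => F a i)
    {C : ℝ} (hFC : ∀ a i, |F a i| ≤ C) {x : ι → ℝ}
    (hG : ∀ i j, sInt (G j) (fun a => F a i) = if i = j then 1 else 0)
    (hc : ∀ i, c i = x i - sInt ζ fun a => F a i) (i : ι) :
    sInt (ζ + ∑ j, c j • G j) (fun a => F a i) = x i := by
  rw [sInt_add_sum_smul_measure ζ G c (hF i) (hFC · i)]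
  simp only [hG, mul_ite, mul_one, mul_zero, Finset.sum_ite_eq, Finset.mem_univ, if_true, hc]
  ring

theorem sInt_add_sum_mul_sum_mul {μ : SignedMeasure α} {g : α → ℝ} {F : α → ι → ℝ}
    (hg : Integrable g μ.totalVariation) (hF : ∀ i, Integrable (fun a => F a i) μ.totalVariation)
    (c : ι → ℝ) (D : ι → ι → ℝ) :
    sInt μ (fun a => g a + ∑ j, c j * ∑ i, D j i * F a i)
      = sInt μ g + ∑ j, c j * ∑ i, D j i * sInt μ (fun a => F a i) := by
  have hDF : ∀ j, Integrable (fun a => ∑ i, D j i * F a i) μ.totalVariation := fun j =>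
    integrable_finsetSum _ fun i _ => (hF i).const_mul _
  rw [sInt_add hg (integrable_finsetSum _ fun j _ => (hDF j).const_mul _),
    sInt_finset_sum _ fun j _ => (hDF j).const_mul _]
  simp only [sInt_const_mul, sInt_finset_sum _ fun i _ => (hF i).const_mul _]

end BLUP

theorem blup_point_mse_value_general {d m : ℕ}
    (T : Set (Fin d → ℝ))
    (t0 : Fin d → ℝ)
    (K : (Fin d → ℝ) → (Fin d → ℝ) → ℝ)
    (hKmeas : Measurable (Function.uncurry K))
    (hKbd : ∃ C, ∀ t s, |K t s| ≤ C)
    (hKsym : ∀ t s, K t s = K s t)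
    (f : (Fin d → ℝ) → Fin m → ℝ)
    (hfmeas : ∀ i, Measurable fun t => f t i)
    (hfbd : ∃ C, ∀ t i, |f t i| ≤ C)
    (G : Fin m → SignedMeasure T) (D : Fin m → Fin m → ℝ)
    (hG1 : ∀ i j, sInt (G j) (fun t => f t.1 i) = if i = j then 1 else 0)
    (hG2 : ∀ (s : T) (k : Fin m),
      sInt (G k) (fun t => K t.1 s.1) = ∑ j, D k j * f s.1 j)
    (ζ : SignedMeasure T)
    (hζ : ∀ s : T, sInt ζ (fun t => K t.1 s.1) = K t0 s.1)
    (c : Fin m → ℝ)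
    (hc : ∀ i, c i = f t0 i - sInt ζ fun t => f t.1 i)
    (Qstar : SignedMeasure T)
    (hQstar : Qstar = ζ + ∑ j, c j • G j)
    (M : SignedMeasure T → ℝ)
    (hM : ∀ Q : SignedMeasure T,
      M Q = K t0 t0 - 2 * (sInt Q fun t => K t.1 t0)
        + (sInt Q fun t => sInt Q fun s => K t.1 s.1)) :
    M Qstar = K t0 t0 + (∑ i, c i * ∑ j, D i j * f t0 j)
      - sInt Qstar (fun t => K t.1 t0) := by
  obtain ⟨CK, hCK⟩ := hKbd
  obtain ⟨Cf, hCf⟩ := hfbd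
  have hKm (s) : Measurable fun t : T => K t.1 s :=
    hKmeas.of_uncurry_right.comp measurable_subtype_coe
  have hfm (i) : Measurable fun t : T => f t.1 i := (hfmeas i).comp measurable_subtype_coe
  have hunbiased : ∀ i, sInt Qstar (fun t => f t.1 i) = f t0 i :=
    hQstar ▸ sInt_add_sum_smul_of_biorthogonal ζ G c hfm (fun t i => hCf t.1 i) hG1 hc
  have hinner (t : T) :
      sInt Qstar (fun s => K t.1 s.1) = K t.1 t0 + ∑ j, c j * ∑ i, D j i * f t.1 i := by
    rw [funext fun s : T => hKsym t.1 s.1, hQstar,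
      sInt_add_sum_smul_measure ζ G c (hKm t.1) (fun s => hCK s.1 t.1), hζ, hKsym t0]
    simp only [hG2]
  rw [hM, funext hinner, sInt_add_sum_mul_sum_mul (integrable_of_abs_le (hKm t0) (hCK · t0) _)
    (fun i => integrable_of_abs_le (hfm i) (hCf · i) _)]
  simp only [hunbiased]
  ring

/-- Theorem 2.1, MSE formula.  Under the hypotheses of Theorem 2.1, with
`D` the covariance matrix of the BLUE, the minimal mean squared error equals
`M(Q*) = K(t₀,t₀) + cᵀ D f(t₀) − ∫_T K(t,t₀) Q*(dt)`. -/
theorem blup_point_mse_value {d m : ℕ}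
    (T : Set (Fin d → ℝ)) (hT : MeasurableSet T)
    (t0 : Fin d → ℝ) (ht0 : t0 ∉ T)
    (K : (Fin d → ℝ) → (Fin d → ℝ) → ℝ)
    (hKmeas : Measurable (Function.uncurry K))
    (hKbd : ∃ C, ∀ t s, |K t s| ≤ C)
    (hKsym : ∀ t s, K t s = K s t)
    (hKpos : ∀ R : SignedMeasure T, 0 ≤ sInt R fun t => sInt R fun s => K t.1 s.1)
    (f : (Fin d → ℝ) → Fin m → ℝ)
    (hfmeas : ∀ i, Measurable fun t => f t i)
    (hfbd : ∃ C, ∀ t i, |f t i| ≤ C)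
    (G : Fin m → SignedMeasure T) (D : Fin m → Fin m → ℝ)
    (hG1 : ∀ i j, sInt (G j) (fun t => f t.1 i) = if i = j then 1 else 0)
    (hG2 : ∀ (s : T) (k : Fin m),
      sInt (G k) (fun t => K t.1 s.1) = ∑ j, D k j * f s.1 j)
    -- `D` is the covariance matrix of the BLUE:
    (hD : ∀ i j, D i j = sInt (G i) fun t => sInt (G j) fun s => K t.1 s.1)
    (ζ : SignedMeasure T)
    (hζ : ∀ s : T, sInt ζ (fun t => K t.1 s.1) = K t0 s.1)
    (c : Fin m → ℝ)
    (hc : ∀ i, c i = f t0 i - sInt ζ fun t => f t.1 i)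
    (Qstar : SignedMeasure T)
    (hQstar : Qstar = ζ + ∑ j, c j • G j)
    (M : SignedMeasure T → ℝ)
    (hM : ∀ Q : SignedMeasure T,
      M Q = K t0 t0 - 2 * (sInt Q fun t => K t.1 t0)
        + (sInt Q fun t => sInt Q fun s => K t.1 s.1)) :
    M Qstar = K t0 t0 + (∑ i, c i * ∑ j, D i j * f t0 j)
      - sInt Qstar (fun t => K t.1 t0) :=
  blup_point_mse_value_general T t0 K hKmeas hKbd hKsym f hfmeas hfbd G D hG1 hG2 ζ hζ c hc Qstar
    hQstar M hM
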